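/- For all integers n ≥ 2 and all real x, the Baxter polynomials satisfy (6n³+28n²+37n+12)·ℬ_n(x) = (n+3)(n+4)·ℬ_{n+1}'(x) + ((8n²+23n+12)x − (n+3)(n+4))·ℬ_n'(x) − 3(n+2)x(x+1)·ℬ_n''(x). -/

import Mathlib

/-!
In the basis `X ^ k` the operators `X d/dX` and `X ^ 2 d²/dX²` act diagonally, by `k` and
`k (k - 1)`, so the recurrence is an identity between the coefficients `D n k`, `D n (k + 1)` and
`D (n + 1) (k + 1)`. Pascal's rule writes the binomials of `n + 2` through those of `n + 1`, and the
ratios `C(n+1, k+1) / C(n+1, k) = (n + 1 - k) / (k + 1)` turn that identity into a rational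
identity in `n` and `k`.
-/

open Finset

noncomputable def D (n k : ℕ) : ℝ :=
  if k = 0 then 0 else
    2 / (n * (n + 1) ^ 2) * (Nat.choose (n + 1) (k - 1)) *
      (Nat.choose (n + 1) k) * (Nat.choose (n + 1) (k + 1))

noncomputable def Bpoly (n : ℕ) (x : ℝ) : ℝ := ∑ k ∈ range (n + 1), D n k * x ^ k

open Polynomial

-- `a, b, c, d` stand for `C(n+1, k-1), …, C(n+1, k+2)` and `N, K` for `n, k`.
lemma baxter_term_identity {N K a b c d : ℝ} (hK : 0 < K) (hKN : K ≤ N)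
    (hab : b * K = a * (N + 2 - K)) (hbc : c * (K + 1) = b * (N + 1 - K))
    (hcd : d * (K + 2) = c * (N - K)) :
    (6 * N ^ 3 + 28 * N ^ 2 + 37 * N + 12) * (2 / (N * (N + 1) ^ 2) * a * b * c)
      = (N + 3) * (N + 4) * ((K + 1) * (2 / ((N + 1) * (N + 2) ^ 2) * (a + b) * (b + c) * (c + d)))
        + (8 * N ^ 2 + 23 * N + 12) * (K * (2 / (N * (N + 1) ^ 2) * a * b * c))
        - (N + 3) * (N + 4) * ((K + 1) * (2 / (N * (N + 1) ^ 2) * b * c * d))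
        - 3 * (N + 2) * (K * (K - 1) * (2 / (N * (N + 1) ^ 2) * a * b * c))
        - 3 * (N + 2) * ((K + 1) * K * (2 / (N * (N + 1) ^ 2) * b * c * d)) := by
  have hN : 0 < N := hK.trans_le hKN
  obtain rfl : a = b * K / (N + 2 - K) := by
    rw [eq_div_iff (by linarith)]; linear_combination -hab
  obtain rfl : c = b * (N + 1 - K) / (K + 1) := by
    rw [eq_div_iff (by linarith)]; linear_combination hbc
  obtain rfl : d = b * (N + 1 - K) / (K + 1) * (N - K) / (K + 2) := by
    rw [eq_div_iff (by linarith)]; linear_combination hcd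
  have : N + 2 - K ≠ 0 := by linarith
  field_simp
  ring

lemma D_zero_right (n : ℕ) : D n 0 = 0 := if_pos rfl

lemma D_succ (n j : ℕ) : D n (j + 1)
    = 2 / (n * (n + 1) ^ 2) * (n + 1).choose j * (n + 1).choose (j + 1) * (n + 1).choose (j + 2) :=
  if_neg j.succ_ne_zero

lemma D_eq_zero_of_lt {n k : ℕ} (h : n < k) : D n k = 0 := by
  simp [D, Nat.choose_eq_zero_of_lt (show n + 1 < k + 1 by omega)]

lemma D_one {n : ℕ} (hn : n ≠ 0) : D n 1 = 1 := by
  rw [D_succ, Nat.choose_zero_right, Nat.choose_one_right, Nat.cast_choose_two]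
  field_simp
  push_cast
  ring

lemma cast_choose_succ_mul {n k : ℕ} (h : k ≤ n) :
    (n.choose (k + 1) : ℝ) * (k + 1) = n.choose k * (n - k) := by
  have := congrArg (Nat.cast : ℕ → ℝ) (Nat.choose_succ_right_eq n k)
  push_cast [h] at this
  exact this

lemma D_recurrence {n : ℕ} (hn : n ≠ 0) (k : ℕ) :
    (6 * (n : ℝ) ^ 3 + 28 * (n : ℝ) ^ 2 + 37 * n + 12) * D n k
      = ((n : ℝ) + 3) * ((n : ℝ) + 4) * ((k + 1) * D (n + 1) (k + 1))
        + (8 * (n : ℝ) ^ 2 + 23 * n + 12) * (k * D n k)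
        - ((n : ℝ) + 3) * ((n : ℝ) + 4) * ((k + 1) * D n (k + 1))
        - 3 * ((n : ℝ) + 2) * (k * (k - 1) * D n k)
        - 3 * ((n : ℝ) + 2) * ((k + 1) * k * D n (k + 1)) := by
  rcases k with _ | j
  · simp only [D_zero_right, D_one hn, D_one n.succ_ne_zero]
    ring
  rcases lt_or_ge n (j + 1) with hnj | hjn
  · simp only [D_eq_zero_of_lt hnj, D_eq_zero_of_lt (show n < j + 2 by omega),
      D_eq_zero_of_lt (show n + 1 < j + 2 by omega)]
    ring
  have hab := cast_choose_succ_mul (show j ≤ n + 1 by omega)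
  have hbc := cast_choose_succ_mul (show j + 1 ≤ n + 1 by omega)
  have hcd := cast_choose_succ_mul (show j + 2 ≤ n + 1 by omega)
  simp only [D_succ, Nat.choose_succ_succ' (n + 1)]
  push_cast at *
  linear_combination baxter_term_identity (N := n) (K := j + 1)
    (a := (n + 1).choose j) (b := (n + 1).choose (j + 1)) (c := (n + 1).choose (j + 2))
    (d := (n + 1).choose (j + 3)) (by positivity) (by exact_mod_cast hjn)
    (by linear_combination hab) (by linear_combination hbc) (by linear_combination hcd)

lemma coeff_X_mul_derivative {R : Type*} [Semiring R] (p : R[X]) (k : ℕ) :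
    (X * derivative p).coeff k = k * p.coeff k := by
  rcases k with _ | k
  · simp
  · rw [coeff_X_mul, coeff_derivative, ← Nat.cast_succ, Nat.cast_comm]

lemma coeff_X_sq_mul_derivative_derivative {R : Type*} [CommRing R] (p : R[X]) (k : ℕ) :
    (X ^ 2 * derivative (derivative p)).coeff k = k * (k - 1) * p.coeff k := by
  rcases k with _ | k
  · simp
  · rw [sq, mul_assoc, coeff_X_mul, coeff_X_mul_derivative, coeff_derivative]
    push_cast
    ring

noncomputable def baxterPoly (n : ℕ) : ℝ[X] := ∑ k ∈ range (n + 1), C (D n k) * X ^ k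

lemma coeff_baxterPoly (n k : ℕ) : (baxterPoly n).coeff k = D n k := by
  simp only [baxterPoly, finsetSum_coeff, coeff_C_mul_X_pow, sum_ite_eq, mem_range]
  split_ifs with h
  · rfl
  · exact (D_eq_zero_of_lt (by omega)).symm

lemma Bpoly_eq_eval (n : ℕ) : Bpoly n = fun x => (baxterPoly n).eval x := by
  ext x
  simp [Bpoly, baxterPoly, eval_finsetSum]

lemma deriv_polynomial_eval {𝕜 : Type*} [NontriviallyNormedField 𝕜] (p : 𝕜[X]) :
    deriv (fun x => p.eval x) = fun x => (derivative p).eval x :=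
  funext fun _ => p.deriv

lemma baxterPoly_recurrence {n : ℕ} (hn : n ≠ 0) :
    C (6 * (n : ℝ) ^ 3 + 28 * (n : ℝ) ^ 2 + 37 * n + 12) * baxterPoly n
      = C (((n : ℝ) + 3) * ((n : ℝ) + 4)) * derivative (baxterPoly (n + 1))
        + C (8 * (n : ℝ) ^ 2 + 23 * n + 12) * (X * derivative (baxterPoly n))
        - C (((n : ℝ) + 3) * ((n : ℝ) + 4)) * derivative (baxterPoly n)
        - C (3 * ((n : ℝ) + 2)) * (X ^ 2 * derivative (derivative (baxterPoly n)))
        - C (3 * ((n : ℝ) + 2)) * (X * derivative (derivative (baxterPoly n))) := by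
  ext k
  simp only [coeff_add, coeff_sub, coeff_C_mul, coeff_derivative, coeff_X_mul_derivative,
    coeff_X_sq_mul_derivative_derivative, coeff_baxterPoly]
  linear_combination D_recurrence hn k

theorem baxter_diff_recurrence2 (n : ℕ) (hn : 2 ≤ n) (x : ℝ) :
    (6 * (n : ℝ) ^ 3 + 28 * (n : ℝ) ^ 2 + 37 * n + 12) * Bpoly n x
      = ((n : ℝ) + 3) * ((n : ℝ) + 4) * deriv (Bpoly (n + 1)) x
        + ((8 * (n : ℝ) ^ 2 + 23 * n + 12) * x - ((n : ℝ) + 3) * ((n : ℝ) + 4)) * deriv (Bpoly n) x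
        - 3 * ((n : ℝ) + 2) * x * (x + 1) * deriv (deriv (Bpoly n)) x := by
  have h := congrArg (eval x) (baxterPoly_recurrence (n := n) (by omega))
  simp only [eval_add, eval_sub, eval_mul, eval_C, eval_X, eval_pow] at h
  simp only [Bpoly_eq_eval, deriv_polynomial_eval]
  linear_combination h
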